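/- arXiv:2302.05218 — 3 statements merged into one kernel-verified Lean document; each statement's English description precedes it below -/
import Mathlib

section
/- Let O ⊆ ℝ^d be bounded, F, G : O × ℝ^d → ℝ^d be bounded and Lipschitz, and let U : [0,T] × O → ℝ^d be bounded and Lipschitz in x with constant C uniformly in t, satisfying the characteristics identity U(t,x) = ∫₀^t G(x(s'), U(t-s', x(s'))) ds' + U₀(x(t)) along the flow x'(s) = -F(x(s), U(t-s, x(s))), x(0) = x, for all t ∈ [0,T], x ∈ O, where U₀ is Lipschitz. Then U is Lipschitz in time: there exists K > 0 depending only on ‖G‖_∞, ‖F‖_∞ and C such that |U(t,x) - U(s,x)| ≤ K |t - s| for all s, t ∈ [0,T], x ∈ O. -/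
open Set Real MeasureTheory intervalIntegral

/-- Time regularity of Lipschitz solutions: a Lipschitz solution of
`∂ₜU + ⟨F(x,U),∇ₓ⟩U = G(x,U)` (defined via the characteristics identity) is
Lipschitz in time, with a constant depending only on `‖G‖_∞`, `‖F‖_∞` and the spatial
Lipschitz constant `C` of `U`. -/
theorem lipschitz_solution_time_regularity
    (d : ℕ) (MF MG C : ℝ) (hMF : 0 ≤ MF) (hMG : 0 ≤ MG) (hC : 0 < C) :
    ∃ K : ℝ, 0 < K ∧
      ∀ (T : ℝ), 0 < T →
      ∀ (O : Set (EuclideanSpace ℝ (Fin d))), Bornology.IsBounded O →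
      ∀ (F G : EuclideanSpace ℝ (Fin d) → EuclideanSpace ℝ (Fin d) → EuclideanSpace ℝ (Fin d))
        (LF LG : ℝ),
        LipschitzWith LF.toNNReal
          (fun p : EuclideanSpace ℝ (Fin d) × EuclideanSpace ℝ (Fin d) => F p.1 p.2) →
        LipschitzWith LG.toNNReal
          (fun p : EuclideanSpace ℝ (Fin d) × EuclideanSpace ℝ (Fin d) => G p.1 p.2) →
        (∀ x ∈ O, ∀ p : EuclideanSpace ℝ (Fin d), ‖F x p‖ ≤ MF) →
        (∀ x ∈ O, ∀ p : EuclideanSpace ℝ (Fin d), ‖G x p‖ ≤ MG) →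
      ∀ (U : ℝ → EuclideanSpace ℝ (Fin d) → EuclideanSpace ℝ (Fin d)) (MU : ℝ),
        (∀ τ ∈ Icc (0:ℝ) T, ∀ y ∈ O, ‖U τ y‖ ≤ MU) →
        (∀ τ ∈ Icc (0:ℝ) T, LipschitzOnWith C.toNNReal (U τ) O) →
      ∀ (U₀ : EuclideanSpace ℝ (Fin d) → EuclideanSpace ℝ (Fin d)) (L₀ : ℝ),
        LipschitzOnWith L₀.toNNReal U₀ O →
      -- the characteristic flow `X t x ·` starting at `x` for terminal time `t`
      ∀ (X : ℝ → EuclideanSpace ℝ (Fin d) → ℝ → EuclideanSpace ℝ (Fin d)),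
        (∀ t ∈ Icc (0:ℝ) T, ∀ x ∈ O, X t x 0 = x) →
        (∀ t ∈ Icc (0:ℝ) T, ∀ x ∈ O, ∀ s ∈ Icc (0:ℝ) t, X t x s ∈ O) →
        (∀ t ∈ Icc (0:ℝ) T, ∀ x ∈ O, ∀ s ∈ Icc (0:ℝ) t,
          HasDerivAt (X t x) (-(F (X t x s) (U (t - s) (X t x s)))) s) →
        -- the characteristics identity defining a Lipschitz solution
        (∀ t ∈ Icc (0:ℝ) T, ∀ x ∈ O,
          U t x = (∫ s' in (0:ℝ)..t, G (X t x s') (U (t - s') (X t x s'))) + U₀ (X t x t)) →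
      ∀ s ∈ Icc (0:ℝ) T, ∀ t ∈ Icc (0:ℝ) T, ∀ x ∈ O,
        ‖U t x - U s x‖ ≤ K * |t - s| := by
  refine ⟨MG + C * MF + 1, by positivity, ?_⟩
  intro T hT O hO F G LF LG hLF hLG hFb hGb U MU hUb hUL U₀ L₀ hU₀ X hX0 hXO hXd hId
  -- it suffices to treat the case `s ≤ t`
  suffices key : ∀ s ∈ Icc (0:ℝ) T, ∀ t ∈ Icc (0:ℝ) T, s ≤ t → ∀ x ∈ O,
      ‖U t x - U s x‖ ≤ (MG + C * MF + 1) * (t - s) by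
    intro s hs t ht x hx
    rcases le_total s t with hst | hst
    · rw [abs_of_nonneg (by linarith)]
      exact key s hs t ht hst x hx
    · rw [abs_of_nonpos (by linarith), ← norm_neg, neg_sub]
      have := key t ht s hs hst x hx
      linarith [this]
  intro s hs t ht hst x hx
  have h0t : (0:ℝ) ≤ t := le_trans hs.1 hst
  set Z : ℝ → EuclideanSpace ℝ (Fin d) := X t x with hZ
  set W : ℝ → EuclideanSpace ℝ (Fin d) := fun σ => U (t - σ) (Z σ) with hW
  set f : ℝ → EuclideanSpace ℝ (Fin d) := fun σ => G (Z σ) (W σ) with hf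
  set c : EuclideanSpace ℝ (Fin d) := U₀ (Z t) with hc
  have hZO : ∀ σ ∈ Icc (0:ℝ) t, Z σ ∈ O := hXO t ht x hx
  have hZd : ∀ σ ∈ Icc (0:ℝ) t, HasDerivAt Z (-(F (Z σ) (W σ))) σ := hXd t ht x hx
  have hZ0 : Z 0 = x := hX0 t ht x hx
  have hCc : (C.toNNReal : ℝ) = C := Real.coe_toNNReal C hC.le
  -- the Lipschitz vector field (time clamped to [0,T])
  set v : ℝ → ℝ → EuclideanSpace ℝ (Fin d) → EuclideanSpace ℝ (Fin d) :=
    fun s₀ τ z => -(F z (U (max 0 (min (s₀ - τ) T)) z)) with hv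
  have hvLip : ∀ s₀ τ : ℝ, LipschitzOnWith (LF.toNNReal * max 1 C.toNNReal) (v s₀ τ) O := by
    intro s₀ τ
    apply LipschitzOnWith.of_dist_le_mul
    intro z₁ hz₁ z₂ hz₂
    set ρ : ℝ := max 0 (min (s₀ - τ) T) with hρ
    have hρT : ρ ∈ Icc (0:ℝ) T := ⟨le_max_left _ _, max_le hT.le (min_le_right _ _)⟩
    have h3 : dist (U ρ z₁) (U ρ z₂) ≤ C * dist z₁ z₂ := by
      have := (hUL ρ hρT).dist_le_mul z₁ hz₁ z₂ hz₂
      rwa [hCc] at this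
    have h2 := hLF.dist_le_mul (z₁, U ρ z₁) (z₂, U ρ z₂)
    rw [Prod.dist_eq] at h2
    have h4 : max (dist z₁ z₂) (dist (U ρ z₁) (U ρ z₂)) ≤ max 1 C * dist z₁ z₂ := by
      apply max_le
      · exact le_mul_of_one_le_left dist_nonneg (le_max_left 1 C)
      · exact le_trans h3 (mul_le_mul_of_nonneg_right (le_max_right 1 C) dist_nonneg)
    have hcoe : ((LF.toNNReal * max 1 C.toNNReal : NNReal) : ℝ) = (LF.toNNReal : ℝ) * max 1 C := by
      rw [NNReal.coe_mul, NNReal.coe_max, NNReal.coe_one, hCc]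
    calc dist (v s₀ τ z₁) (v s₀ τ z₂)
        = dist (F z₁ (U ρ z₁)) (F z₂ (U ρ z₂)) := by
          simp only [hv, dist_neg_neg]; rfl
      _ ≤ (LF.toNNReal : ℝ) * max (dist z₁ z₂) (dist (U ρ z₁) (U ρ z₂)) := h2
      _ ≤ (LF.toNNReal : ℝ) * (max 1 C * dist z₁ z₂) :=
          mul_le_mul_of_nonneg_left h4 (NNReal.coe_nonneg _)
      _ = ((LF.toNNReal * max 1 C.toNNReal : NNReal) : ℝ) * dist z₁ z₂ := by
          rw [hcoe]; ring
  -- the shift/uniqueness lemma : the flow at later starting times coincides with `Z` shifted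
  have shift : ∀ σ ∈ Icc (0:ℝ) t, ∀ τ ∈ Icc (0:ℝ) (t - σ), X (t - σ) (Z σ) τ = Z (τ + σ) := by
    intro σ hσ
    set s₀ : ℝ := t - σ with hs₀
    have hs₀T : s₀ ∈ Icc (0:ℝ) T := ⟨by simp [hs₀]; linarith [hσ.2], by simp [hs₀]; linarith [ht.2, hσ.1]⟩
    have hZσ : Z σ ∈ O := hZO σ hσ
    have hmax : ∀ τ ∈ Icc (0:ℝ) s₀, max 0 (min (s₀ - τ) T) = s₀ - τ := by
      intro τ hτ
      rw [min_eq_left (by linarith [hτ.1, hs₀T.2]), max_eq_right (by linarith [hτ.2])]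
    have heq : EqOn (X s₀ (Z σ)) (fun τ => Z (τ + σ)) (Icc (0:ℝ) s₀) := by
      apply ODE_solution_unique_of_mem_Icc_right (v := v s₀) (s := fun _ => O)
        (fun τ _ => hvLip s₀ τ)
      · intro τ hτ
        exact ((hXd s₀ hs₀T (Z σ) hZσ τ hτ).continuousAt).continuousWithinAt
      · intro τ hτ
        have hd := hXd s₀ hs₀T (Z σ) hZσ τ ⟨hτ.1, hτ.2.le⟩
        have : v s₀ τ (X s₀ (Z σ) τ) = -(F (X s₀ (Z σ) τ) (U (s₀ - τ) (X s₀ (Z σ) τ))) := by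
          simp only [hv, hmax τ ⟨hτ.1, hτ.2.le⟩]
        rw [this]
        exact hd.hasDerivWithinAt
      · intro τ hτ
        exact hXO s₀ hs₀T (Z σ) hZσ τ ⟨hτ.1, hτ.2.le⟩
      · intro τ hτ
        have hτσ : τ + σ ∈ Icc (0:ℝ) t := ⟨by linarith [hτ.1, hσ.1], by linarith [hτ.2]⟩
        have hcomp : ContinuousAt (Z ∘ (fun r : ℝ => r + σ)) τ :=
          ContinuousAt.comp (hZd (τ + σ) hτσ).continuousAt (continuous_add_right σ).continuousAt
        exact hcomp.continuousWithinAt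
      · intro τ hτ
        have hτσ : τ + σ ∈ Icc (0:ℝ) t := ⟨by linarith [hτ.1, hσ.1], by linarith [hτ.2.le]⟩
        have hd := (hZd (τ + σ) hτσ).comp_add_const τ σ
        have : v s₀ τ (Z (τ + σ)) = -(F (Z (τ + σ)) (W (τ + σ))) := by
          have h5 : t - (τ + σ) = s₀ - τ := by simp [hs₀]; ring
          simp only [hv, hW, hmax τ ⟨hτ.1, hτ.2.le⟩, h5]
        rw [this]
        exact hd.hasDerivWithinAt
      · intro τ hτ
        exact hZO (τ + σ) ⟨by linarith [hτ.1, hσ.1], by linarith [hτ.2.le]⟩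
      · rw [hX0 s₀ hs₀T (Z σ) hZσ, zero_add]
    exact fun τ hτ => heq hτ
  -- the key identity along characteristics
  have star : ∀ σ ∈ Icc (0:ℝ) t, W σ = (∫ τ in σ..t, f τ) + c := by
    intro σ hσ
    have hs₀T : t - σ ∈ Icc (0:ℝ) T := ⟨by linarith [hσ.2], by linarith [ht.2, hσ.1]⟩
    have hZσ : Z σ ∈ O := hZO σ hσ
    have h1 := hId (t - σ) hs₀T (Z σ) hZσ
    have e1 : EqOn (fun τ => G (X (t - σ) (Z σ) τ) (U ((t - σ) - τ) (X (t - σ) (Z σ) τ)))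
        (fun τ => f (τ + σ)) (uIcc (0:ℝ) (t - σ)) := by
      intro τ hτ
      rw [uIcc_of_le (by linarith [hσ.2])] at hτ
      have h6 : t - σ - τ = t - (τ + σ) := by ring
      simp only [shift σ hσ τ hτ, hf, hW, h6]
    have e2 : X (t - σ) (Z σ) (t - σ) = Z t := by
      rw [shift σ hσ (t - σ) ⟨by linarith [hσ.2], le_refl _⟩, sub_add_cancel]
    show U (t - σ) (Z σ) = _
    rw [h1, intervalIntegral.integral_congr e1, intervalIntegral.integral_comp_add_right,
      zero_add, sub_add_cancel, e2]
  have hW0 : W 0 = U t x := by simp [hW, hZ0]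
  -- bound on the integrand
  have hfb : ∀ σ ∈ Icc (0:ℝ) t, ‖f σ‖ ≤ MG := fun σ hσ => hGb (Z σ) (hZO σ hσ) (W σ)
  -- continuity of Z
  have hZcont : ContinuousOn Z (Icc (0:ℝ) t) :=
    fun σ hσ => ((hZd σ hσ).continuousAt).continuousWithinAt
  -- integrability of f on [0, t]
  have hInt : IntervalIntegrable f volume 0 t := by
    set A : Set ℝ := {σ | σ ∈ Icc (0:ℝ) t ∧ IntervalIntegrable f volume σ t} with hA
    have htA : t ∈ A := ⟨⟨h0t, le_refl t⟩, IntervalIntegrable.refl⟩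
    have hAne : A.Nonempty := ⟨t, htA⟩
    have hAbdd : BddBelow A := ⟨0, fun σ hσ => hσ.1.1⟩
    set σs : ℝ := sInf A with hσs
    have h0σs : 0 ≤ σs := le_csInf hAne (fun σ hσ => hσ.1.1)
    have hσst : σs ≤ t := csInf_le hAbdd htA
    have claim1 : ∀ σ, σs < σ → σ ≤ t → IntervalIntegrable f volume σ t := by
      intro σ hσ1 hσ2
      obtain ⟨a, haA, halt⟩ := exists_lt_of_csInf_lt hAne hσ1
      refine haA.2.mono_set ?_
      rw [uIcc_of_le hσ2, uIcc_of_le haA.1.2]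
      exact Icc_subset_Icc halt.le le_rfl
    have claim2 : ∀ σ, 0 ≤ σ → σ < σs → f σ = G (Z σ) c := by
      intro σ hσ0 hσlt
      have hσt : σ ≤ t := le_trans hσlt.le hσst
      have hnot : ¬ IntervalIntegrable f volume σ t := by
        intro hcon
        exact absurd hσlt (not_lt.2 (csInf_le hAbdd ⟨⟨hσ0, hσt⟩, hcon⟩))
      have := star σ ⟨hσ0, hσt⟩
      rw [intervalIntegral.integral_undef hnot, zero_add] at this
      simp only [hf, this]
    rw [intervalIntegrable_iff_integrableOn_Ioc_of_le h0t]
    have hsub : Ioc (0:ℝ) t ⊆ Ico (0:ℝ) σs ∪ ({σs} ∪ Ioc σs t) := by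
      intro σ hσ
      rcases lt_trichotomy σ σs with h | h | h
      · exact Or.inl ⟨hσ.1.le, h⟩
      · exact Or.inr (Or.inl h)
      · exact Or.inr (Or.inr ⟨h, hσ.2⟩)
    refine IntegrableOn.mono_set ?_ hsub
    apply IntegrableOn.union
    · -- piece on [0, σs): f is a continuous function there
      have hg₀ : IntegrableOn (fun σ => G (Z σ) c) (Icc (0:ℝ) t) volume := by
        apply ContinuousOn.integrableOn_Icc
        exact hLG.continuous.comp_continuousOn (hZcont.prodMk continuousOn_const)
      refine (IntegrableOn.mono_set hg₀ ?_).congr_fun ?_ measurableSet_Ico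
      · exact fun σ hσ => ⟨hσ.1, le_trans hσ.2.le hσst⟩
      · exact fun σ hσ => (claim2 σ hσ.1 hσ.2).symm
    apply IntegrableOn.union
    · -- singleton: measure zero
      have : volume.restrict ({σs} : Set ℝ) = 0 := by
        rw [Measure.restrict_eq_zero]
        exact measure_singleton σs
      unfold IntegrableOn
      rw [this]
      exact integrable_zero_measure
    · -- piece on (σs, t]: measurable as a countable union, and bounded
      have hmeas : AEStronglyMeasurable f (volume.restrict (Ioc σs t)) := by
        rcases eq_or_lt_of_le hσst with heq | hlt
        · rw [heq, Ioc_self, Measure.restrict_empty]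
          exact aestronglyMeasurable_zero_measure f
        · have hunion : Ioc σs t = ⋃ n : ℕ, Ioc (σs + (t - σs)/((n:ℝ) + 1)) t := by
            ext σ
            simp only [mem_iUnion, mem_Ioc]
            constructor
            · rintro ⟨hσ1, hσ2⟩
              obtain ⟨n, hn⟩ := exists_nat_one_div_lt
                (show (0:ℝ) < (σ - σs)/(t - σs) by
                  apply div_pos <;> linarith)
              refine ⟨n, ?_, hσ2⟩
              rw [div_lt_div_iff₀ (by positivity) (by linarith)] at hn
              have h7 : (t - σs)/((n:ℝ) + 1) < σ - σs := by
                rw [div_lt_iff₀ (by positivity)]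
                nlinarith
              linarith
            · rintro ⟨n, hn1, hn2⟩
              refine ⟨lt_of_le_of_lt (le_add_of_nonneg_right ?_) hn1, hn2⟩
              exact div_nonneg (by linarith) (by positivity)
          rw [hunion]
          apply AEStronglyMeasurable.iUnion
          intro n
          have hlep : σs < σs + (t - σs)/((n:ℝ) + 1) := by
            have : (0:ℝ) < (t - σs)/((n:ℝ) + 1) := by
              apply div_pos (by linarith) (by positivity)
            linarith
          rcases le_or_gt (σs + (t - σs)/((n:ℝ) + 1)) t with hle | hgt
          · have := claim1 _ hlep hle
            rw [intervalIntegrable_iff_integrableOn_Ioc_of_le hle] at this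
            exact this.aestronglyMeasurable
          · rw [Ioc_eq_empty (not_lt.2 hgt.le), Measure.restrict_empty]
            exact aestronglyMeasurable_zero_measure f
      apply Integrable.mono' (g := fun _ => MG)
        (integrableOn_const measure_Ioc_lt_top.ne) hmeas
      refine (ae_restrict_iff' measurableSet_Ioc).2 (Filter.Eventually.of_forall ?_)
      intro σ hσ
      exact hfb σ ⟨le_trans h0σs hσ.1.le, hσ.2⟩
  -- now conclude
  have hts : t - s ∈ Icc (0:ℝ) t := ⟨by linarith, by linarith [hs.1]⟩
  have hWh : W (t - s) = U s (Z (t - s)) := by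
    simp only [hW, sub_sub_cancel]
  have hsplit : U t x - U s (Z (t - s)) = ∫ τ in (0:ℝ)..(t - s), f τ := by
    have h8 := star 0 ⟨le_refl 0, h0t⟩
    have h9 := star (t - s) hts
    rw [hW0] at h8
    rw [hWh] at h9
    have h10 : (∫ τ in (0:ℝ)..(t - s), f τ) + (∫ τ in (t - s)..t, f τ) = ∫ τ in (0:ℝ)..t, f τ :=
      intervalIntegral.integral_add_adjacent_intervals
        (hInt.mono_set (by rw [uIcc_of_le hts.1, uIcc_of_le h0t]; exact Icc_subset_Icc le_rfl hts.2))
        (hInt.mono_set (by rw [uIcc_of_le (by linarith [hts.2] : t - s ≤ t), uIcc_of_le h0t]; exact Icc_subset_Icc hts.1 le_rfl))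
    rw [h8, h9]
    rw [← h10]
    abel
  have hbound1 : ‖U t x - U s (Z (t - s))‖ ≤ MG * (t - s) := by
    rw [hsplit]
    have := intervalIntegral.norm_integral_le_of_norm_le_const (C := MG) (f := f)
      (a := 0) (b := t - s) ?_
    · rwa [sub_zero, abs_of_nonneg hts.1] at this
    · intro σ hσ
      rw [uIoc_of_le hts.1] at hσ
      exact hfb σ ⟨hσ.1.le, le_trans hσ.2 hts.2⟩
  have hZts : Z (t - s) ∈ O := hZO (t - s) hts
  have hbound2 : ‖U s (Z (t - s)) - U s x‖ ≤ C * (MF * (t - s)) := by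
    have hL := (hUL s hs).dist_le_mul (Z (t - s)) hZts x hx
    rw [hCc, dist_eq_norm, dist_eq_norm] at hL
    refine le_trans hL (mul_le_mul_of_nonneg_left ?_ hC.le)
    -- ‖Z (t-s) - x‖ ≤ MF * (t - s)
    have hmean : ‖Z (t - s) - Z 0‖ ≤ MF * ‖(t - s) - 0‖ := by
      apply Convex.norm_image_sub_le_of_norm_hasDerivWithin_le
        (f' := fun σ => -(F (Z σ) (W σ))) ?_ ?_ (convex_Icc 0 t) ⟨le_refl 0, h0t⟩ hts
      · exact fun σ hσ => (hZd σ hσ).hasDerivWithinAt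
      · intro σ hσ
        rw [norm_neg]
        exact hFb (Z σ) (hZO σ hσ) (W σ)
    rw [hZ0] at hmean
    rwa [sub_zero, norm_of_nonneg hts.1] at hmean
  calc ‖U t x - U s x‖ = ‖(U t x - U s (Z (t - s))) + (U s (Z (t - s)) - U s x)‖ := by abel_nf
    _ ≤ ‖U t x - U s (Z (t - s))‖ + ‖U s (Z (t - s)) - U s x‖ := norm_add_le _ _
    _ ≤ MG * (t - s) + C * (MF * (t - s)) := add_le_add hbound1 hbound2
    _ ≤ (MG + C * MF + 1) * (t - s) := by nlinarith
end

section
/- Let A be a self-adjoint n × n real matrix with a negative eigenvalue -λ (λ > 0). Then the solution A(t) = A(I + tA)⁻¹ of A'(t) = -A(t)², A(0) = A, blows up at the finite time T^c = 1/λ: ‖A(t)‖ → ∞ as t → (1/λ)⁻, and I + tA is singular at t = 1/λ. -/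
open Set Filter

lemma isUnit_of_injective {n : ℕ} (f : EuclideanSpace ℝ (Fin n) →L[ℝ] EuclideanSpace ℝ (Fin n))
    (hf : Function.Injective f) : IsUnit f := by
  have hb : Function.Bijective (f : EuclideanSpace ℝ (Fin n) →ₗ[ℝ] EuclideanSpace ℝ (Fin n)) :=
    ⟨hf, (LinearMap.injective_iff_surjective).mp hf⟩
  let e := (LinearEquiv.ofBijective _ hb).toContinuousLinearEquiv
  refine ⟨⟨f, e.symm.toContinuousLinearMap, ?_, ?_⟩, rfl⟩
  all_goals
    have hce : (e : EuclideanSpace ℝ (Fin n) → EuclideanSpace ℝ (Fin n)) = f := rfl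
  · refine ContinuousLinearMap.ext fun x => ?_
    have := e.apply_symm_apply x
    rw [hce] at this
    simpa using this
  · refine ContinuousLinearMap.ext fun x => ?_
    have := e.symm_apply_apply x
    rw [hce] at this
    simpa using this


/-- Finite-time blow-up in the non-monotone regime: if the self-adjoint operator `A` on
`ℝⁿ` has a negative eigenvalue `-λ` (`λ > 0`), then the solution `A(t) = A (I + tA)⁻¹`
of `A' = -A²`, `A(0) = A`, blows up at `T^c = 1/λ`: `I + (1/λ)A` is singular and
`‖A(t)‖ → ∞` as `t → (1/λ)⁻`. -/
theorem riccati_blowup_of_negative_eigenvalue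
    (n : ℕ) (lam : ℝ) (hlam : 0 < lam)
    (A : EuclideanSpace ℝ (Fin n) →L[ℝ] EuclideanSpace ℝ (Fin n))
    (hA : IsSelfAdjoint A)
    (heig : ∃ v : EuclideanSpace ℝ (Fin n), v ≠ 0 ∧ A v = (-lam) • v) :
    ¬ IsUnit ((1 : EuclideanSpace ℝ (Fin n) →L[ℝ] EuclideanSpace ℝ (Fin n)) + (1/lam) • A) ∧
    Tendsto
      (fun t : ℝ =>
        ‖A ∘L Ring.inverse ((1 : EuclideanSpace ℝ (Fin n) →L[ℝ] EuclideanSpace ℝ (Fin n)) + t • A)‖)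
      (nhdsWithin (1/lam) (Set.Iio (1/lam))) atTop := by
  obtain ⟨v, hv, hAv⟩ := heig
  set c : ℝ := 1 / lam with hc
  have hlam' : lam ≠ 0 := hlam.ne'
  -- the action of `1 + t • A` on `v`
  have happ : ∀ t : ℝ, ((1 : EuclideanSpace ℝ (Fin n) →L[ℝ] EuclideanSpace ℝ (Fin n)) + t • A) v
      = (1 - lam * t) • v := by
    intro t
    simp only [ContinuousLinearMap.add_apply, ContinuousLinearMap.one_apply,
      ContinuousLinearMap.smul_apply, hAv, smul_smul]
    rw [sub_smul, one_smul]
    module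
  constructor
  · intro hu
    have h0 : ((1 : EuclideanSpace ℝ (Fin n) →L[ℝ] EuclideanSpace ℝ (Fin n)) + (1/lam) • A) v = 0 := by
      rw [happ]
      rw [mul_one_div, div_self hlam', sub_self, zero_smul]
    obtain ⟨w, hw⟩ := hu
    apply hv
    have h2 : (w.inv * w.val) v = v := by rw [w.inv_val]; rfl
    rw [hw, ContinuousLinearMap.mul_apply, h0, map_zero] at h2
    exact h2.symm
  · -- the set of bad times is finite
    set T : Set ℝ := {t : ℝ | ∃ x : EuclideanSpace ℝ (Fin n), x ≠ 0 ∧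
      ((1 : EuclideanSpace ℝ (Fin n) →L[ℝ] EuclideanSpace ℝ (Fin n)) + t • A) x = 0} with hT
    have hTfin : T.Finite := by
      have hS : Set.Finite (Module.End.HasEigenvalue
          (A : EuclideanSpace ℝ (Fin n) →ₗ[ℝ] EuclideanSpace ℝ (Fin n))) :=
        Module.End.finite_hasEigenvalue _
      refine (hS.image fun μ => -μ⁻¹).subset ?_
      rintro t ⟨x, hx, hxt⟩
      have hxA : x + t • A x = 0 := by
        simpa [ContinuousLinearMap.add_apply] using hxt
      have ht0 : t ≠ 0 := by
        rintro rfl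
        simp at hxA
        exact hx hxA
      have hAx : A x = (-t⁻¹) • x := by
        have h3 : t • A x = -x := by linear_combination (norm := module) hxA
        have h4 := congrArg (fun y => t⁻¹ • y) h3
        simpa [smul_smul, inv_mul_cancel₀ ht0] using h4
      refine ⟨-t⁻¹, ?_, by field_simp⟩
      exact Module.End.hasEigenvalue_of_hasEigenvector
        ⟨(Module.End.mem_eigenspace_iff).2 hAx, hx⟩
    -- eventually `1 + t • A` is a unit
    have hunit : ∀ᶠ t in nhdsWithin c (Set.Iio c),
        IsUnit ((1 : EuclideanSpace ℝ (Fin n) →L[ℝ] EuclideanSpace ℝ (Fin n)) + t • A) := by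
      have h1 : (T \ {c})ᶜ ∈ nhds c :=
        ((hTfin.diff : (T \ {c}).Finite).isClosed).isOpen_compl.mem_nhds (by simp)
      filter_upwards [nhdsWithin_le_nhds h1, self_mem_nhdsWithin] with t ht ht'
      have htT : t ∉ T := fun hmem => ht ⟨hmem, ne_of_lt ht'⟩
      apply isUnit_of_injective
      intro x y hxy
      by_contra hne
      exact htT ⟨x - y, sub_ne_zero.2 hne, by rw [map_sub, hxy, sub_self]⟩
    -- lower bound tends to infinity
    have hglim : Tendsto (fun t : ℝ => lam * (1 - lam * t)⁻¹)
        (nhdsWithin c (Set.Iio c)) atTop := by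
      have h0 : Tendsto (fun t : ℝ => 1 - lam * t) (nhdsWithin c (Set.Iio c))
          (nhdsWithin 0 (Set.Ioi 0)) := by
        rw [tendsto_nhdsWithin_iff]
        constructor
        · have : Tendsto (fun t : ℝ => 1 - lam * t) (nhds c) (nhds (1 - lam * c)) :=
            (continuous_const.sub (continuous_const.mul continuous_id)).tendsto c
          have hc0 : 1 - lam * c = 0 := by rw [hc, mul_one_div, div_self hlam', sub_self]
          rw [hc0] at this
          exact this.mono_left nhdsWithin_le_nhds
        · filter_upwards [self_mem_nhdsWithin] with t ht
          have : lam * t < 1 := by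
            rw [hc] at ht
            calc lam * t < lam * (1 / lam) := by
                  exact (mul_lt_mul_iff_right₀ hlam).2 ht
              _ = 1 := by field_simp
          simpa using this
      exact (tendsto_inv_nhdsGT_zero.comp h0).const_mul_atTop hlam
    refine tendsto_atTop_mono' _ ?_ hglim
    filter_upwards [hunit, self_mem_nhdsWithin] with t hu ht
    have h1t : 0 < 1 - lam * t := by
      have : lam * t < 1 := by
        rw [hc] at ht
        calc lam * t < lam * (1 / lam) := (mul_lt_mul_iff_right₀ hlam).2 ht
          _ = 1 := by field_simp
      linarith
    set u := (1 : EuclideanSpace ℝ (Fin n) →L[ℝ] EuclideanSpace ℝ (Fin n)) + t • A with hu'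
    obtain ⟨w, hw⟩ := hu
    have hRinv : Ring.inverse u = w.inv := by rw [← hw, Ring.inverse_unit]; rfl
    have hBv : (Ring.inverse u) v = (1 - lam * t)⁻¹ • v := by
      have huv : u ((1 - lam * t)⁻¹ • v) = v := by
        rw [map_smul, happ t, smul_smul, inv_mul_cancel₀ h1t.ne', one_smul]
      have h2 : (w.inv * w.val) ((1 - lam * t)⁻¹ • v) = (1 - lam * t)⁻¹ • v := by
        rw [w.inv_val]; rfl
      rw [hw, ContinuousLinearMap.mul_apply, huv] at h2
      rw [hRinv]
      exact h2
    have hnorm : ‖(A ∘L Ring.inverse u) v‖ = (lam * (1 - lam * t)⁻¹) * ‖v‖ := by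
      rw [ContinuousLinearMap.comp_apply, hBv, map_smul, hAv, smul_smul, norm_smul]
      rw [Real.norm_eq_abs, abs_of_neg]
      · ring_nf
      · exact mul_neg_of_pos_of_neg (inv_pos.2 h1t) (neg_neg_iff_pos.2 hlam)
    have hvpos : 0 < ‖v‖ := norm_pos_iff.2 hv
    have := (A ∘L Ring.inverse u).le_opNorm v
    rw [hnorm] at this
    exact le_of_mul_le_mul_right (by linarith [this]) hvpos
end

section
/- Let O ⊆ ℝ^d be open and bounded with C¹ boundary and outward unit normal η, and let F : O̅ × ℝ^d → ℝ^d be Lipschitz. Assume ⟨η(x), F(x,p)⟩ ≥ 0 for all x ∈ ∂O and all p ∈ ℝ^d. Let U : [0,T] × O̅ → ℝ^d be continuous and Lipschitz in x, fix t ∈ [0,T], and consider the ODE x'(s) = -F(x(s), U(t-s, x(s))) with initial condition x(0) = x₀ ∈ O̅. Then the unique solution satisfies x(s) ∈ O̅ for all s ∈ [0, t]: the closure of O is invariant under the backward characteristic flow. -/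
open Set Metric Filter Topology

set_option maxHeartbeats 1000000

lemma aux_gradCont {d : ℕ} {Φ : EuclideanSpace ℝ (Fin d) → ℝ} (hΦ : ContDiff ℝ 1 Φ) :
    Continuous (fun x => gradient Φ x) := by
  have h1 : Continuous (fderiv ℝ Φ) := hΦ.continuous_fderiv one_ne_zero
  exact ((InnerProductSpace.toDual ℝ _).symm.continuous).comp h1

lemma aux_lineDeriv {d : ℕ} {Φ : EuclideanSpace ℝ (Fin d) → ℝ} (hΦ : ContDiff ℝ 1 Φ)
    (z η : EuclideanSpace ℝ (Fin d)) (r : ℝ) :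
    HasDerivAt (fun r : ℝ => Φ (z - r • η))
      ((inner ℝ (gradient Φ (z - r • η)) (-η) : ℝ)) r := by
  have h1 : HasDerivAt (fun r : ℝ => z - r • η) (-η) r := by
    simpa using ((hasDerivAt_id r).smul_const η).const_sub z
  have h2 := (((hΦ.differentiable one_ne_zero) (z - r • η)).hasGradientAt.hasFDerivAt).comp_hasDerivAt r h1
  simp [InnerProductSpace.toDual_apply_apply] at h2 ⊢; exact h2

lemma auxA {d : ℕ} {Φ : EuclideanSpace ℝ (Fin d) → ℝ} (hΦ : ContDiff ℝ 1 Φ)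
    (K : Set (EuclideanSpace ℝ (Fin d))) (hK : K = {x | Φ x ≤ 0})
    {y : EuclideanSpace ℝ (Fin d)} (hy : ‖gradient Φ y‖ = 1) :
    ∃ δ > 0, ∀ z, dist z y < δ → 0 ≤ Φ z → Φ z < δ → Metric.infDist z K ≤ 2 * Φ z := by
  set η := gradient Φ y with hη
  obtain ⟨δ₀, hδ₀, hball⟩ := Metric.continuousAt_iff.1 (aux_gradCont hΦ).continuousAt (1/4) (by norm_num)
  refine ⟨δ₀/4, by positivity, fun z hz hz0 hzδ => ?_⟩
  set b := 2 * Φ z with hb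
  have hb0 : 0 ≤ b := by positivity
  -- gradient close to η along the segment
  have hseg : ∀ r ∈ Icc (0:ℝ) b, ‖gradient Φ (z - r • η) - η‖ < 1/4 := by
    intro r hr
    have hdz : dist (z - r • η) z = |r| := by
      rw [dist_eq_norm, sub_sub_cancel_left, norm_neg, norm_smul, hy, mul_one, Real.norm_eq_abs]
    have h1 : dist (z - r • η) y < δ₀ := by
      have hrb : |r| ≤ b := by rw [abs_of_nonneg hr.1]; exact hr.2
      have hbδ : b < δ₀/2 := by rw [hb]; linarith
      calc dist (z - r • η) y ≤ dist (z - r • η) z + dist z y := dist_triangle _ _ _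
        _ < δ₀ := by rw [hdz]; linarith [hrb.trans_lt hbδ]
    have := hball h1
    rwa [dist_eq_norm] at this
  -- the auxiliary function g is antitone on [0, b]
  set g : ℝ → ℝ := fun r => Φ (z - r • η) + r / 2 with hg
  have hgd : ∀ r : ℝ, HasDerivAt g ((inner ℝ (gradient Φ (z - r • η)) (-η) : ℝ) + 1/2) r :=
    fun r => (aux_lineDeriv hΦ z η r).add ((hasDerivAt_id r).div_const 2)
  have hmono : AntitoneOn g (Icc 0 b) := by
    apply antitoneOn_of_deriv_nonpos (convex_Icc 0 b)
    · exact fun r _ => ((hgd r).continuousAt).continuousWithinAt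
    · exact fun r _ => ((hgd r).differentiableAt).differentiableWithinAt
    · intro r hr
      rw [interior_Icc] at hr
      rw [(hgd r).deriv]
      have hw := hseg r ⟨le_of_lt hr.1, le_of_lt hr.2⟩
      set w := gradient Φ (z - r • η)
      have h2 : (inner ℝ w η : ℝ) = 1 + inner ℝ (w - η) η := by
        rw [inner_sub_left, real_inner_self_eq_norm_sq, hy]; ring
      have h3 : |(inner ℝ (w - η) η : ℝ)| ≤ ‖w - η‖ := by
        simpa [hy] using abs_real_inner_le_norm (w - η) η
      have h4 : (1:ℝ)/2 ≤ inner ℝ w η := by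
        have := abs_le.1 h3
        rw [h2]; linarith [hw]
      have h5 : (inner ℝ w (-η) : ℝ) = - inner ℝ w η := by rw [inner_neg_right]
      rw [h5]; linarith
  have hgb : g b ≤ g 0 := hmono (left_mem_Icc.2 hb0) (right_mem_Icc.2 hb0) hb0
  have hΦb : Φ (z - b • η) ≤ 0 := by
    have : Φ (z - b • η) + b/2 ≤ Φ z + 0/2 := by simpa [hg] using hgb
    rw [hb] at this ⊢; linarith
  have hmem : z - b • η ∈ K := by rw [hK]; exact hΦb
  calc Metric.infDist z K ≤ dist z (z - b • η) := Metric.infDist_le_dist_of_mem hmem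
    _ = b := by
        rw [dist_eq_norm, sub_sub_cancel, norm_smul, hy, mul_one, Real.norm_eq_abs,
          abs_of_nonneg hb0]
    _ ≤ 2 * Φ z := by rw [hb]

lemma aux_lineDeriv' {d : ℕ} {Φ : EuclideanSpace ℝ (Fin d) → ℝ} (hΦ : ContDiff ℝ 1 Φ)
    (z w : EuclideanSpace ℝ (Fin d)) (r : ℝ) :
    HasDerivAt (fun r : ℝ => Φ (z + r • w))
      ((inner ℝ (gradient Φ (z + r • w)) w : ℝ)) r := by
  have h1 : HasDerivAt (fun r : ℝ => z + r • w) w r := by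
    simpa using ((hasDerivAt_id r).smul_const w).const_add z
  have h2 := (((hΦ.differentiable one_ne_zero) (z + r • w)).hasGradientAt.hasFDerivAt).comp_hasDerivAt r h1
  simp [InnerProductSpace.toDual_apply_apply] at h2 ⊢; exact h2

open Filter Topology in
lemma auxB {d : ℕ} {Φ : EuclideanSpace ℝ (Fin d) → ℝ} (hΦ : ContDiff ℝ 1 Φ)
    (K : Set (EuclideanSpace ℝ (Fin d))) (hK : K = {x | Φ x ≤ 0})
    (hunit' : ∀ x, Φ x = 0 → ‖gradient Φ x‖ = 1)
    (y : EuclideanSpace ℝ (Fin d)) (hy : y ∈ K)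
    (w : EuclideanSpace ℝ (Fin d)) (hw : Φ y = 0 → (inner ℝ (gradient Φ y) w : ℝ) ≤ 0)
    (c : ℝ) (hc : 0 < c) :
    ∀ᶠ h in 𝓝[>] (0:ℝ), Metric.infDist (y + h • w) K ≤ c * h := by
  have hyK : Φ y ≤ 0 := by rw [hK] at hy; exact hy
  have hcont : Tendsto (fun h : ℝ => y + h • w) (𝓝[>] (0:ℝ)) (𝓝 y) := by
    have hc1 : Continuous fun h : ℝ => y + h • w := by continuity
    have := (hc1.tendsto 0).mono_left (nhdsWithin_le_nhds (s := Set.Ioi (0:ℝ)))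
    simpa using this
  rcases lt_or_eq_of_le hyK with hlt | heq
  · -- y in the open region
    have hopen : IsOpen {x | Φ x < 0} := isOpen_lt hΦ.continuous continuous_const
    have hev := hcont.eventually (hopen.eventually_mem hlt)
    filter_upwards [hev, self_mem_nhdsWithin] with h h1 h2
    have : y + h • w ∈ K := by rw [hK]; exact le_of_lt h1
    rw [Metric.infDist_zero_of_mem this]
    have : (0:ℝ) < h := h2
    positivity
  · -- y on the boundary
    have hy0 : Φ y = 0 := heq
    obtain ⟨δ, hδ, hδ'⟩ := auxA hΦ K hK (hunit' y hy0)
    set D : ℝ := inner ℝ (gradient Φ y) w with hD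
    have hD0 : D ≤ 0 := hw hy0
    have hder : HasDerivAt (fun h : ℝ => Φ (y + h • w)) D 0 := by
      have := aux_lineDeriv' hΦ y w 0
      simpa [hD] using this
    have hlo := (hasDerivAt_iff_isLittleO.1 hder).def (by positivity : (0:ℝ) < c/4)
    have hlo' := hlo.filter_mono (nhdsWithin_le_nhds (s := Set.Ioi (0:ℝ)))
    have hball : ∀ᶠ h in 𝓝[>] (0:ℝ), (y + h • w) ∈ Metric.ball y δ :=
      hcont.eventually (Metric.ball_mem_nhds y hδ)
    have hsmall : ∀ᶠ h in 𝓝[>] (0:ℝ), h < δ / (c/4 + 1) := by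
      have : Set.Ioo (0:ℝ) (δ / (c/4 + 1)) ∈ 𝓝[>] (0:ℝ) :=
        Ioo_mem_nhdsGT_of_mem ⟨le_refl _, by positivity⟩
      filter_upwards [this] with h hh using hh.2
    filter_upwards [hlo', hball, hsmall, self_mem_nhdsWithin] with h h1 h2 h3 h4
    have hpos : 0 < h := h4
    simp only [zero_smul, add_zero] at h1
    have hΦh : Φ (y + h • w) ≤ c/4 * h := by
      rw [hy0, Real.norm_eq_abs, Real.norm_eq_abs, sub_zero, sub_zero, smul_eq_mul,
        abs_of_pos hpos] at h1
      have := (abs_le.1 h1).2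
      nlinarith [mul_nonpos_of_nonneg_of_nonpos (le_of_lt hpos) hD0]
    by_cases hsign : Φ (y + h • w) ≤ 0
    · have : y + h • w ∈ K := by rw [hK]; exact hsign
      rw [Metric.infDist_zero_of_mem this]; positivity
    · push_neg at hsign
      have hΦδ : Φ (y + h • w) < δ := by
        have h3' : h * (c/4 + 1) < δ := (lt_div_iff₀ (by positivity)).1 h3
        have : c/4 * h < δ := by nlinarith
        linarith
      have := hδ' (y + h • w) (Metric.mem_ball.1 h2) (le_of_lt hsign) hΦδ
      calc Metric.infDist (y + h • w) K ≤ 2 * Φ (y + h • w) := this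
        _ ≤ 2 * (c/4 * h) := by linarith
        _ ≤ c * h := by nlinarith


/-- Invariance of the domain under the backward characteristic flow: if `O = {Φ < 0}` is an
open bounded domain with `C¹` boundary `∂O = {Φ = 0}` (defining function `Φ` with unit
gradient on the boundary, `η = ∇Φ` the outward normal), and `⟨η(x), F(x,p)⟩ ≥ 0` on `∂O`,
then solutions of `x'(s) = -F(x(s), U(t-s, x(s)))` starting in `O̅` stay in `O̅`. -/
theorem characteristics_stay_in_domain
    (d : ℕ)
    (Φ : EuclideanSpace ℝ (Fin d) → ℝ) (hΦ : ContDiff ℝ 1 Φ)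
    (O : Set (EuclideanSpace ℝ (Fin d)))
    (hO : O = {x | Φ x < 0})
    (hObdd : Bornology.IsBounded O)
    (hfr : frontier O = {x | Φ x = 0})
    (hunit : ∀ x ∈ frontier O, ‖gradient Φ x‖ = 1)
    (F : EuclideanSpace ℝ (Fin d) → EuclideanSpace ℝ (Fin d) → EuclideanSpace ℝ (Fin d))
    (LF : ℝ)
    (hF : LipschitzWith LF.toNNReal
      (fun p : EuclideanSpace ℝ (Fin d) × EuclideanSpace ℝ (Fin d) => F p.1 p.2))
    -- the boundary condition ⟨η(x), F(x,p)⟩ ≥ 0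
    (hbc : ∀ x ∈ frontier O, ∀ p : EuclideanSpace ℝ (Fin d),
      (0:ℝ) ≤ inner ℝ (gradient Φ x) (F x p))
    (T C : ℝ) (hT : 0 < T) (hC : 0 ≤ C)
    (U : ℝ → EuclideanSpace ℝ (Fin d) → EuclideanSpace ℝ (Fin d))
    (hUcont : Continuous fun p : ℝ × EuclideanSpace ℝ (Fin d) => U p.1 p.2)
    (hULip : ∀ τ, LipschitzWith C.toNNReal (U τ))
    (t : ℝ) (ht : t ∈ Icc (0:ℝ) T)
    (x₀ : EuclideanSpace ℝ (Fin d)) (hx₀ : x₀ ∈ closure O)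
    (X : ℝ → EuclideanSpace ℝ (Fin d))
    (hX0 : X 0 = x₀)
    (hXode : ∀ s ∈ Icc (0:ℝ) t, HasDerivAt X (-(F (X s) (U (t - s) (X s)))) s) :
    ∀ s ∈ Icc (0:ℝ) t, X s ∈ closure O := by
  set K : Set (EuclideanSpace ℝ (Fin d)) := {x | Φ x ≤ 0} with hKdef
  have hO_open : IsOpen O := hO ▸ isOpen_lt hΦ.continuous continuous_const
  have hclo : closure O = K := by
    rw [closure_eq_interior_union_frontier, hO_open.interior_eq, hfr, hO]
    ext x
    simp only [Set.mem_union, Set.mem_setOf_eq, hKdef, le_iff_lt_or_eq]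
  have hKclosed : IsClosed K := isClosed_le hΦ.continuous continuous_const
  have hKne : K.Nonempty := ⟨x₀, hclo ▸ hx₀⟩
  have hunit' : ∀ x, Φ x = 0 → ‖gradient Φ x‖ = 1 := fun x hx =>
    hunit x (by rw [hfr]; exact hx)
  have hbc' : ∀ x, Φ x = 0 → ∀ p, (0:ℝ) ≤ inner ℝ (gradient Φ x) (F x p) := fun x hx =>
    hbc x (by rw [hfr]; exact hx)
  set L' : ℝ := (LF.toNNReal : ℝ) * max 1 C with hL'
  have hL'0 : 0 ≤ L' := by positivity
  set f : ℝ → ℝ := fun s => Metric.infDist (X s) K with hf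
  -- continuity of f on [0, t]
  have hfc : ContinuousOn f (Icc 0 t) := fun s hs =>
    ((Metric.continuous_infDist_pt K).continuousAt.comp
      (hXode s hs).continuousAt).continuousWithinAt
  -- the differential inequality
  have hf' : ∀ s ∈ Ico (0:ℝ) t, ∀ r, L' * f s < r →
      ∃ᶠ z in 𝓝[>] s, (z - s)⁻¹ * (f z - f s) < r := by
    intro s hs r hr
    have hsIcc : s ∈ Icc (0:ℝ) t := ⟨hs.1, hs.2.le⟩
    obtain ⟨y, hyK, hyd⟩ := hKclosed.exists_infDist_eq_dist hKne (X s)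
    set v : EuclideanSpace ℝ (Fin d) := -(F (X s) (U (t - s) (X s))) with hv
    set w : EuclideanSpace ℝ (Fin d) := -(F y (U (t - s) y)) with hwdef
    -- Lipschitz bound on the discrepancy of vector fields
    have hvw : ‖v - w‖ ≤ L' * f s := by
      have h1 := hF.dist_le_mul (X s, U (t - s) (X s)) (y, U (t - s) y)
      rw [Prod.dist_eq] at h1
      have h2 : dist (U (t - s) (X s)) (U (t - s) y) ≤ C * dist (X s) y := by
        have := (hULip (t - s)).dist_le_mul (X s) y
        rwa [Real.coe_toNNReal C hC] at this
      have h3 : max (dist (X s) y) (dist (U (t - s) (X s)) (U (t - s) y))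
          ≤ max 1 C * dist (X s) y := by
        apply max_le
        · nlinarith [dist_nonneg (x := X s) (y := y), le_max_left (1:ℝ) C]
        · calc dist (U (t - s) (X s)) (U (t - s) y) ≤ C * dist (X s) y := h2
            _ ≤ max 1 C * dist (X s) y := by
                nlinarith [dist_nonneg (x := X s) (y := y), le_max_right (1:ℝ) C]
      have h4 : ‖v - w‖ = dist (F (X s) (U (t - s) (X s))) (F y (U (t - s) y)) := by
        rw [hv, hwdef, dist_eq_norm, neg_sub_neg, ← neg_sub, norm_neg]
      rw [h4]
      have hfs : f s = dist (X s) y := hyd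
      rw [hfs]
      calc dist (F (X s) (U (t - s) (X s))) (F y (U (t - s) y))
          ≤ (LF.toNNReal : ℝ) * max (dist (X s) y) (dist (U (t - s) (X s)) (U (t - s) y)) := h1
        _ ≤ (LF.toNNReal : ℝ) * (max 1 C * dist (X s) y) := by
            have : (0:ℝ) ≤ (LF.toNNReal : ℝ) := (LF.toNNReal).coe_nonneg
            nlinarith
        _ = L' * dist (X s) y := by rw [hL']; ring
    set c : ℝ := (r - L' * f s) / 2 with hcdef
    have hc : 0 < c := by rw [hcdef]; linarith
    -- the boundary condition at y
    have hw : Φ y = 0 → (inner ℝ (gradient Φ y) w : ℝ) ≤ 0 := by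
      intro hy0
      rw [hwdef, inner_neg_right]
      linarith [hbc' y hy0 (U (t - s) y)]
    have hB := auxB hΦ K hKdef hunit' y hyK w hw (c / 2) (by positivity)
    -- transfer hB from 𝓝[>]0 to 𝓝[>]s
    have htr : Tendsto (fun z : ℝ => z - s) (𝓝[>] s) (𝓝[>] (0:ℝ)) := by
      apply tendsto_nhdsWithin_of_tendsto_nhds_of_eventually_within
      · have : Tendsto (fun z : ℝ => z - s) (𝓝 s) (𝓝 (s - s)) :=
          (continuous_id.sub continuous_const).tendsto s
        rw [sub_self] at this
        exact this.mono_left nhdsWithin_le_nhds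
      · filter_upwards [self_mem_nhdsWithin] with z hz
        exact sub_pos.2 (Set.mem_Ioi.1 hz)
    have hB' := htr.eventually hB
    -- the little-o estimate from the ODE
    have hlo := (hasDerivAt_iff_isLittleO.1 (hXode s hsIcc)).def (by positivity : (0:ℝ) < c / 2)
    have hlo' := hlo.filter_mono (nhdsWithin_le_nhds (s := Set.Ioi s))
    apply Filter.Eventually.frequently
    filter_upwards [hlo', hB', self_mem_nhdsWithin] with z h1 h2 hz
    have hzs : 0 < z - s := sub_pos.2 (Set.mem_Ioi.1 hz)
    have key : f z - f s ≤ (z - s) * (c + L' * f s) := by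
      have e1 : f z ≤ Metric.infDist (y + (z - s) • w) K + dist (X z) (y + (z - s) • w) :=
        Metric.infDist_le_infDist_add_dist
      have e2 : dist (X z) (y + (z - s) • w)
          ≤ ‖X z - X s - (z - s) • v‖ + dist (X s) y + (z - s) * ‖v - w‖ := by
        have hdecomp : X z - (y + (z - s) • w)
            = (X z - X s - (z - s) • v) + (X s - y) + (z - s) • (v - w) := by
          rw [smul_sub]; abel
        rw [dist_eq_norm, hdecomp]
        calc ‖(X z - X s - (z - s) • v) + (X s - y) + (z - s) • (v - w)‖
            ≤ ‖(X z - X s - (z - s) • v) + (X s - y)‖ + ‖(z - s) • (v - w)‖ := norm_add_le _ _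
          _ ≤ ‖X z - X s - (z - s) • v‖ + ‖X s - y‖ + ‖(z - s) • (v - w)‖ := by
              linarith [norm_add_le (X z - X s - (z - s) • v) (X s - y)]
          _ = ‖X z - X s - (z - s) • v‖ + dist (X s) y + (z - s) * ‖v - w‖ := by
              rw [dist_eq_norm, norm_smul, Real.norm_eq_abs, abs_of_pos hzs]
      have e3 : ‖X z - X s - (z - s) • v‖ ≤ c / 2 * (z - s) := by
        have := h1
        rwa [Real.norm_eq_abs (z - s), abs_of_pos hzs] at this
      have e4 : (z - s) * ‖v - w‖ ≤ (z - s) * (L' * f s) := by nlinarith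
      have e5 : dist (X s) y = f s := hyd.symm
      nlinarith [h2, e1, e2, e3, e4, e5]
    rw [inv_mul_lt_iff₀ hzs]
    calc f z - f s ≤ (z - s) * (c + L' * f s) := key
      _ < (z - s) * r := by
          apply mul_lt_mul_of_pos_left _ hzs
          rw [hcdef]; linarith
  -- Grönwall
  have hgron := le_gronwallBound_of_liminf_deriv_right_le (f' := fun s => L' * f s)
    (δ := 0) (K := L') (ε := 0) hfc hf'
    (by rw [hf]; simp only [hX0]
        exact le_of_eq (Metric.infDist_zero_of_mem (hclo ▸ hx₀)))
    (fun x _ => by rw [add_zero])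
  intro s hs
  have hb := hgron s hs
  rw [gronwallBound_ε0_δ0] at hb
  have h0 : f s = 0 := le_antisymm hb Metric.infDist_nonneg
  rw [hclo]
  exact (hKclosed.mem_iff_infDist_zero hKne).2 h0
end
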